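/- Fix τ ∈ ℂ with Im τ ≠ 0, let Λ = {m + n·τ : m, n ∈ ℤ}, and let p, q ∈ ℂ with p − q ∉ Λ. Let f, g : ℂ → ℂ be Λ-elliptic functions such that: f is analytic at every z ∉ p + Λ and meromorphicOrderAt f z = −2 for every z ∈ p + Λ; g is analytic at every z ∉ q + Λ and meromorphicOrderAt g z = −2 for every z ∈ q + Λ. Suppose a, b, c, d ∈ ℂ with c ≠ 0 satisfy f(z)·(c·g(z) + d) = a·g(z) + b for all z ∉ (p + Λ) ∪ (q + Λ). Then the function h(z) = c·g(z) + d satisfies: meromorphicOrderAt h z = 2 for every z ∈ p + Λ, meromorphicOrderAt h z = −2 for every z ∈ q + Λ, and meromorphicOrderAt h z = 0 for every other z ∈ ℂ. -/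

import Mathlib

-- The order of a meromorphic function at a point, as an element of `ℤ ∪ {∞}`
-- (junk value `0` if the function is not meromorphic at the point).
open Classical in
noncomputable def meromorphicOrderAt' (f : ℂ → ℂ) (x : ℂ) : WithTop ℤ :=
  if h : MeromorphicAt f x then
    ((analyticOrderAt (fun z ↦ (z - x) ^ h.choose • f z) x).map (↑· : ℕ → ℤ)) - h.choose
  else 0

/-- The lattice `Λ = {m + n·τ : m, n ∈ ℤ}` generated by `1` and `τ`. -/
def latticeSet (τ : ℂ) : Set ℂ := {z | ∃ m n : ℤ, z = (m : ℂ) + (n : ℂ) * τ}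

/-- A function `h : ℂ → ℂ` is `Λ`-elliptic (for the lattice generated by `1` and `τ`)
if it is meromorphic on all of `ℂ` and doubly periodic with periods `1` and `τ`. -/
def IsElliptic (τ : ℂ) (h : ℂ → ℂ) : Prop :=
  MeromorphicOn h Set.univ ∧ (∀ z, h (z + 1) = h z) ∧ (∀ z, h (z + τ) = h z)

/-!
Put `h = c g + d` and `k = a g + b`; then `f h = k` off the two cosets, and `a h - c k = ad - bc`
is constant. If `ad = bc`, then `f = a / c` near `q`, where `h` has a pole and hence no zeros
nearby; by the identity theorem `f` would have no pole at `p`. So `h` and `k` never vanish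
together. On `q + Λ`, `h` inherits the double pole of `g`. On `p + Λ`, `h` and `k` are analytic
and `ord f + ord h = ord k ≥ 0`, so `h` vanishes there, `k` does not, and `ord h = 2`. Elsewhere,
`h(z) = 0` would force `k(z) = 0`.
-/

open Filter Topology

section MeromorphicOrder

variable {𝕜 : Type*} [NontriviallyNormedField 𝕜] {f h k : 𝕜 → 𝕜} {x : 𝕜}

theorem meromorphicOrderAt_const_mul_add_const_of_neg
    (hneg : meromorphicOrderAt f x < 0) {c : 𝕜} (hc : c ≠ 0) (d : 𝕜) :
    meromorphicOrderAt (fun w ↦ c * f w + d) x = meromorphicOrderAt f x := by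
  have hmul : meromorphicOrderAt (fun w ↦ c * f w) x = meromorphicOrderAt f x :=
    meromorphicOrderAt_mul_of_ne_zero (g := fun _ ↦ c) analyticAt_const hc
  rw [← hmul]
  refine meromorphicOrderAt_add_eq_left_of_lt (f₁ := fun w ↦ c * f w) (f₂ := fun _ ↦ d)
    (MeromorphicAt.const d x) ?_
  exact hmul ▸ hneg.trans_le analyticAt_const.meromorphicOrderAt_nonneg

theorem MeromorphicOn.not_eventuallyEq_const_of_meromorphicOrderAt_neg {U : Set 𝕜}
    (hf : MeromorphicOn f U) (hU : IsPreconnected U) (hx : x ∈ U) {y : 𝕜} (hy : y ∈ U)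
    (hpole : meromorphicOrderAt f y < 0) (e : 𝕜) : ¬ f =ᶠ[𝓝[≠] x] fun _ ↦ e := by
  intro hfe
  have hshift : meromorphicOrderAt (f + fun _ ↦ -e) y = meromorphicOrderAt f y :=
    meromorphicOrderAt_add_eq_left_of_lt (MeromorphicAt.const _ y)
      (hpole.trans_le analyticAt_const.meromorphicOrderAt_nonneg)
  refine (hf.add (MeromorphicOn.const (-e))).meromorphicOrderAt_ne_top_of_isPreconnected hU hy hx
    (hshift ▸ hpole.ne_top) ?_
  exact meromorphicOrderAt_eq_top_iff.mpr (hfe.mono fun w hw ↦ by simp [hw])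

theorem MeromorphicAt.eventuallyEq_const_of_mul_eventuallyEq (hh : MeromorphicAt h x)
    (hh_top : meromorphicOrderAt h x ≠ ⊤) {e : 𝕜} (hfh : f * h =ᶠ[𝓝[≠] x] fun w ↦ e * h w) :
    f =ᶠ[𝓝[≠] x] fun _ ↦ e := by
  filter_upwards [hfh, (meromorphicOrderAt_ne_top_iff_eventually_ne_zero hh).mp hh_top]
    with w hw hw0
  exact mul_right_cancel₀ hw0 hw

theorem meromorphicOrderAt_eq_of_mul_eventuallyEq {n : ℤ} (hf : MeromorphicAt f x)
    (hfn : meromorphicOrderAt f x = (-n : ℤ)) (hn : 0 < n) (hh : AnalyticAt 𝕜 h x)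
    (hk : AnalyticAt 𝕜 k x) (hfhk : f * h =ᶠ[𝓝[≠] x] k) (hhk : h x ≠ 0 ∨ k x ≠ 0) :
    meromorphicOrderAt h x = n := by
  have hsum : meromorphicOrderAt f x + meromorphicOrderAt h x = meromorphicOrderAt k x := by
    rw [← meromorphicOrderAt_mul hf hh.meromorphicAt]
    exact meromorphicOrderAt_congr hfhk
  have hk0 : k x ≠ 0 := by
    refine hhk.resolve_left fun hh0 ↦ ?_
    rw [hfn, hh.meromorphicNFAt.meromorphicOrderAt_eq_zero_iff.mpr hh0, add_zero] at hsum
    have := hsum ▸ hk.meromorphicOrderAt_nonneg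
    exact absurd (WithTop.coe_le_coe.mp this) (by omega)
  rw [hfn, hk.meromorphicNFAt.meromorphicOrderAt_eq_zero_iff.mpr hk0] at hsum
  cases hho : meromorphicOrderAt h x with
  | top => simp [hho] at hsum
  | coe m =>
    rw [hho, ← WithTop.coe_add] at hsum
    have : -n + m = 0 := by exact_mod_cast hsum
    rw [show m = n by omega]

end MeromorphicOrder

theorem meromorphicOrderAt'_eq_meromorphicOrderAt :
    meromorphicOrderAt' = meromorphicOrderAt (𝕜 := ℂ) (E := ℂ) := rfl

theorem linearIndependent_one_of_im_ne_zero {τ : ℂ} (hτ : τ.im ≠ 0) :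
    LinearIndependent ℝ ![1, τ] := by
  refine LinearIndependent.pair_iff.mpr fun s t hst ↦ ?_
  obtain rfl : t = 0 := by simpa [hτ] using congrArg Complex.im hst
  simpa using congrArg Complex.re hst

def periodPairOne {τ : ℂ} (hτ : τ.im ≠ 0) : PeriodPair :=
  ⟨1, τ, linearIndependent_one_of_im_ne_zero hτ⟩

theorem latticeSet_eq_lattice {τ : ℂ} (hτ : τ.im ≠ 0) :
    latticeSet τ = (periodPairOne hτ).lattice := by
  ext z
  simp [latticeSet, PeriodPair.mem_lattice, periodPairOne, eq_comm]

theorem eventually_sub_notMem_latticeSet {τ : ℂ} (hτ : τ.im ≠ 0) (c z : ℂ) :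
    ∀ᶠ w in 𝓝[≠] z, w - c ∉ latticeSet τ := by
  rw [latticeSet_eq_lattice hτ]
  have hnear := ((continuous_sub_right c).tendsto z).eventually
    ((periodPairOne hτ).compl_lattice_sdiff_singleton_mem_nhds (z - c))
  filter_upwards [nhdsWithin_le_nhds hnear, self_mem_nhdsWithin] with w hw (hwz : w ≠ z)
  exact fun hmem ↦ hw ⟨hmem, by simpa [sub_left_inj] using hwz⟩

theorem divisor_of_mobius_factor_general (τ : ℂ) (hτ : τ.im ≠ 0) (p q : ℂ)
    (hpq : p - q ∉ latticeSet τ)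
    (f g : ℂ → ℂ) (hf : IsElliptic τ f) (hg : IsElliptic τ g)
    (hford : ∀ z : ℂ, z - p ∈ latticeSet τ →
      meromorphicOrderAt' f z = ((-2 : ℤ) : WithTop ℤ))
    (hgan : ∀ z : ℂ, z - q ∉ latticeSet τ → AnalyticAt ℂ g z)
    (hgord : ∀ z : ℂ, z - q ∈ latticeSet τ →
      meromorphicOrderAt' g z = ((-2 : ℤ) : WithTop ℤ))
    (a b c d : ℂ) (hc : c ≠ 0)
    (hrel : ∀ z : ℂ, z - p ∉ latticeSet τ → z - q ∉ latticeSet τ →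
      f z * (c * g z + d) = a * g z + b) :
    (∀ z : ℂ, z - p ∈ latticeSet τ →
      meromorphicOrderAt' (fun w => c * g w + d) z = ((2 : ℤ) : WithTop ℤ)) ∧
    (∀ z : ℂ, z - q ∈ latticeSet τ →
      meromorphicOrderAt' (fun w => c * g w + d) z = ((-2 : ℤ) : WithTop ℤ)) ∧
    (∀ z : ℂ, z - p ∉ latticeSet τ → z - q ∉ latticeSet τ →
      meromorphicOrderAt' (fun w => c * g w + d) z = 0) := by
  simp only [meromorphicOrderAt'_eq_meromorphicOrderAt] at *
  have hpole_h : ∀ z, z - q ∈ latticeSet τ →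
      meromorphicOrderAt (fun w => c * g w + d) z = ((-2 : ℤ) : WithTop ℤ) := fun z hz ↦ by
    rw [meromorphicOrderAt_const_mul_add_const_of_neg (by rw [hgord z hz]; decide) hc, hgord z hz]
  have hrel_near : ∀ z, (f * fun w => c * g w + d) =ᶠ[𝓝[≠] z] fun w => a * g w + b := fun z ↦ by
    filter_upwards [eventually_sub_notMem_latticeSet hτ p z,
      eventually_sub_notMem_latticeSet hτ q z] with w hwp hwq using hrel w hwp hwq
  have hdet : a * d - b * c ≠ 0 := by
    intro hdet
    refine hf.1.not_eventuallyEq_const_of_meromorphicOrderAt_neg isPreconnected_univ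
      (Set.mem_univ q) (Set.mem_univ p) (by rw [hford p ⟨0, 0, by simp⟩]; decide) (a / c) ?_
    have hgq := hg.1 q trivial
    refine MeromorphicAt.eventuallyEq_const_of_mul_eventuallyEq (by fun_prop)
      (by rw [hpole_h q ⟨0, 0, by simp⟩]; simp) ((hrel_near q).trans (.of_forall fun w ↦ ?_))
    field_simp
    linear_combination -hdet
  have hno_common_zero : ∀ z, c * g z + d ≠ 0 ∨ a * g z + b ≠ 0 := fun z ↦ by
    by_contra! h0
    exact hdet (by linear_combination a * h0.1 - c * h0.2)
  refine ⟨fun z hz ↦ ?_, hpole_h, fun z hzp hzq ↦ ?_⟩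
  · have hzq : z - q ∉ latticeSet τ := fun hzq ↦ hpq (by
      rw [latticeSet_eq_lattice hτ] at hzq hz ⊢
      simpa using sub_mem hzq hz)
    exact meromorphicOrderAt_eq_of_mul_eventuallyEq (hf.1 z trivial) (hford z hz) two_pos
      (by fun_prop) (by fun_prop) (hrel_near z) (hno_common_zero z)
  · have hh : AnalyticAt ℂ (fun w => c * g w + d) z := by fun_prop
    refine hh.meromorphicNFAt.meromorphicOrderAt_eq_zero_iff.mpr fun h0 ↦ ?_
    exact (hno_common_zero z).elim (· h0) (· (by simpa [h0] using (hrel z hzp hzq).symm))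

/-- Claim 4 of Proposition 3.9: if two degree-two elliptic functions `f` (double poles on
`p + Λ`) and `g` (double poles on `q + Λ`) satisfy `f * (c * g + d) = a * g + b` with
`c ≠ 0`, then `h = c * g + d` has divisor `2p - 2q`. -/
theorem divisor_of_mobius_factor (τ : ℂ) (hτ : τ.im ≠ 0) (p q : ℂ)
    (hpq : p - q ∉ latticeSet τ)
    (f g : ℂ → ℂ) (hf : IsElliptic τ f) (hg : IsElliptic τ g)
    (hfan : ∀ z : ℂ, z - p ∉ latticeSet τ → AnalyticAt ℂ f z)
    (hford : ∀ z : ℂ, z - p ∈ latticeSet τ →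
      meromorphicOrderAt' f z = ((-2 : ℤ) : WithTop ℤ))
    (hgan : ∀ z : ℂ, z - q ∉ latticeSet τ → AnalyticAt ℂ g z)
    (hgord : ∀ z : ℂ, z - q ∈ latticeSet τ →
      meromorphicOrderAt' g z = ((-2 : ℤ) : WithTop ℤ))
    (a b c d : ℂ) (hc : c ≠ 0)
    (hrel : ∀ z : ℂ, z - p ∉ latticeSet τ → z - q ∉ latticeSet τ →
      f z * (c * g z + d) = a * g z + b) :
    (∀ z : ℂ, z - p ∈ latticeSet τ →
      meromorphicOrderAt' (fun w => c * g w + d) z = ((2 : ℤ) : WithTop ℤ)) ∧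
    (∀ z : ℂ, z - q ∈ latticeSet τ →
      meromorphicOrderAt' (fun w => c * g w + d) z = ((-2 : ℤ) : WithTop ℤ)) ∧
    (∀ z : ℂ, z - p ∉ latticeSet τ → z - q ∉ latticeSet τ →
      meromorphicOrderAt' (fun w => c * g w + d) z = 0) :=
  divisor_of_mobius_factor_general τ hτ p q hpq f g hf hg hford hgan hgord a b c d hc hrel
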